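/- arXiv:2208.14343 — 2 statements merged into one kernel-verified Lean document; each statement's English description precedes it below -/
import Mathlib

section
/- For fixed v ∈ ℝ³, I > 0, r, R ∈ (0,1), σ ∈ S², the map h : (v*, I*) ↦ (x, y) with x = (v+v*)/2 - √(R(¼|v-v*|² + I + I*)) σ and y = (1-R)(1-r)(¼|v-v*|² + I + I*) is injective on ℝ³ × ℝ₊, with inverse given by v* = 2x + 2√(Ray) σ - v and I* = ay - I - |x - v + √(Ray) σ|², where a = 1/((1-r)(1-R)), defined on the set {(x,y) : ay - I - |x - v + √(Ray)σ|² > 0}. -/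
/-! The second component of `h` is a fixed multiple of the energy
`¼|v - v*|² + I + I*`, so `a y` recovers the energy and hence the shift `√(R a y) σ`.
Undoing the shift gives back the midpoint `(v + v*)/2`, whence `v*`, and the energy
minus `I + ¼|v - v*|²` gives `I*`. These formulas invert `h`, so `h` is injective. -/

section Midpoint

variable {E : Type*} [NormedAddCommGroup E] [NormedSpace ℝ E]

lemma eq_two_smul_midpoint_sub_add_sub (v w σ : E) (s : ℝ) :
    w = (2:ℝ) • ((1/2:ℝ) • (v + w) - s • σ) + (2 * s) • σ - v := by
  module

lemma norm_midpoint_sub_sub_add_sq (v w σ : E) (s : ℝ) :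
    ‖(1/2:ℝ) • (v + w) - s • σ - v + s • σ‖ ^ 2 = 1/4 * ‖v - w‖ ^ 2 := by
  have hmid : (1/2:ℝ) • (v + w) - s • σ - v + s • σ = (-(1/2:ℝ)) • (v - w) := by module
  rw [hmid, norm_smul, mul_pow]
  norm_num

end Midpoint

theorem stmt11_general (v : EuclideanSpace ℝ (Fin 3)) (I : ℝ)
    (r R : ℝ) (hr : r ∈ Set.Ioo (0:ℝ) 1) (hR : R ∈ Set.Ioo (0:ℝ) 1)
    (σ : EuclideanSpace ℝ (Fin 3))
    (a : ℝ) (ha : a = ((1 - r) * (1 - R))⁻¹)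
    (h : EuclideanSpace ℝ (Fin 3) × ℝ → EuclideanSpace ℝ (Fin 3) × ℝ)
    (hh : ∀ p : EuclideanSpace ℝ (Fin 3) × ℝ,
      h p = ((1/2:ℝ) • (v + p.1) -
               Real.sqrt (R * ((1/4) * ‖v - p.1‖^2 + I + p.2)) • σ,
             (1 - R) * (1 - r) * ((1/4) * ‖v - p.1‖^2 + I + p.2))) :
    Set.InjOn h {p | 0 < p.2} ∧
    ∀ p : EuclideanSpace ℝ (Fin 3) × ℝ, 0 < p.2 →
      p.1 = (2:ℝ) • (h p).1 + (2 * Real.sqrt (R * a * (h p).2)) • σ - v ∧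
      p.2 = a * (h p).2 - I - ‖(h p).1 - v + Real.sqrt (R * a * (h p).2) • σ‖^2 ∧
      0 < a * (h p).2 - I - ‖(h p).1 - v + Real.sqrt (R * a * (h p).2) • σ‖^2 := by
  have hr1 : 1 - r ≠ 0 := sub_ne_zero.2 hr.2.ne'
  have hR1 : 1 - R ≠ 0 := sub_ne_zero.2 hR.2.ne'
  have hinv : ∀ p : EuclideanSpace ℝ (Fin 3) × ℝ,
      p.1 = (2:ℝ) • (h p).1 + (2 * Real.sqrt (R * a * (h p).2)) • σ - v ∧
      p.2 = a * (h p).2 - I - ‖(h p).1 - v + Real.sqrt (R * a * (h p).2) • σ‖^2 := by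
    intro p
    have henergy : a * (h p).2 = 1/4 * ‖v - p.1‖^2 + I + p.2 := by
      rw [hh, ha]
      field_simp
    rw [mul_assoc R a, henergy, hh]
    refine ⟨eq_two_smul_midpoint_sub_add_sub _ _ _ _, ?_⟩
    rw [norm_midpoint_sub_sub_add_sq]
    ring
  refine ⟨fun p _ q _ hpq => ?_, fun p hp => ⟨(hinv p).1, (hinv p).2, (hinv p).2 ▸ hp⟩⟩
  obtain ⟨hp1, hp2⟩ := hinv p
  obtain ⟨hq1, hq2⟩ := hinv q
  rw [hpq] at hp1 hp2
  exact Prod.ext (hp1.trans hq1.symm) (hp2.trans hq2.symm)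

theorem stmt11 (v : EuclideanSpace ℝ (Fin 3)) (I : ℝ) (hI : 0 < I)
    (r R : ℝ) (hr : r ∈ Set.Ioo (0:ℝ) 1) (hR : R ∈ Set.Ioo (0:ℝ) 1)
    (σ : EuclideanSpace ℝ (Fin 3)) (hσ : ‖σ‖ = 1)
    (a : ℝ) (ha : a = ((1 - r) * (1 - R))⁻¹)
    (h : EuclideanSpace ℝ (Fin 3) × ℝ → EuclideanSpace ℝ (Fin 3) × ℝ)
    (hh : ∀ p : EuclideanSpace ℝ (Fin 3) × ℝ,
      h p = ((1/2:ℝ) • (v + p.1) -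
               Real.sqrt (R * ((1/4) * ‖v - p.1‖^2 + I + p.2)) • σ,
             (1 - R) * (1 - r) * ((1/4) * ‖v - p.1‖^2 + I + p.2))) :
    Set.InjOn h {p | 0 < p.2} ∧
    ∀ p : EuclideanSpace ℝ (Fin 3) × ℝ, 0 < p.2 →
      p.1 = (2:ℝ) • (h p).1 + (2 * Real.sqrt (R * a * (h p).2)) • σ - v ∧
      p.2 = a * (h p).2 - I - ‖(h p).1 - v + Real.sqrt (R * a * (h p).2) • σ‖^2 ∧
      0 < a * (h p).2 - I - ‖(h p).1 - v + Real.sqrt (R * a * (h p).2) • σ‖^2 :=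
  stmt11_general v I r R hr hR σ a ha h hh
end

section
/- Let γ ≥ 0. There exists c > 0 such that for all v ∈ ℝ³ and I ≥ 0: I^{γ/2} + ∫_{ℝ³} | |v| - |v*| |^γ e^{-½|v*|²} dv* ≥ c (|v|^γ + I^{γ/2} + 1). -/
/-!
The integrand is bounded below, uniformly in `v`, on a set of fixed positive measure: for
`|v| ≥ 1` on the ball `|v*| ≤ 1/2`, where `| |v| - |v*| | ≥ |v| / 2`, and for `|v| ≤ 1` on the
shell `2 < |v*| < 3`, where `| |v| - |v*| | ≥ 1`. Integrability comes from `x ^ γ ≤ exp (γ x)`,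
which lets half of the Gaussian absorb the weight `| |v| - |v*| | ^ γ`.
-/

open MeasureTheory Metric Real

lemma Real.rpow_le_exp_mul {x γ : ℝ} (hx : 0 ≤ x) (hγ : 0 ≤ γ) : x ^ γ ≤ exp (γ * x) :=
  calc x ^ γ ≤ exp x ^ γ := rpow_le_rpow hx (by linarith [add_one_le_exp x]) hγ
    _ = exp (γ * x) := by rw [← exp_mul, mul_comm]

lemma abs_sub_rpow_mul_exp_le {a r γ : ℝ} (ha : 0 ≤ a) (hr : 0 ≤ r) (hγ : 0 ≤ γ) :
    |a - r| ^ γ * exp (-(1/2) * r ^ 2) ≤ exp (γ * a + γ ^ 2) * exp (-(1/4) * r ^ 2) :=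
  calc |a - r| ^ γ * exp (-(1/2) * r ^ 2)
      ≤ exp (γ * (a + r)) * exp (-(1/2) * r ^ 2) := by
        gcongr
        refine (rpow_le_rpow (abs_nonneg _) ?_ hγ).trans (rpow_le_exp_mul (by positivity) hγ)
        rw [abs_sub_le_iff]; constructor <;> linarith
    _ = exp (γ * a + γ ^ 2) * exp (-(1/4) * r ^ 2 - (γ - r / 2) ^ 2) := by
        rw [← exp_add, ← exp_add]; ring_nf
    _ ≤ exp (γ * a + γ ^ 2) * exp (-(1/4) * r ^ 2) := by
        gcongr; nlinarith [sq_nonneg (γ - r / 2)]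

lemma MeasureTheory.mul_measureReal_le_integral {X : Type*} [MeasurableSpace X] {μ : Measure X}
    {f : X → ℝ} {s : Set X} {m : ℝ} (hf : Integrable f μ) (hf0 : 0 ≤ᵐ[μ] f)
    (hs : MeasurableSet s) (hμs : μ s ≠ ⊤) (hm : ∀ x ∈ s, m ≤ f x) :
    m * μ.real s ≤ ∫ x, f x ∂μ :=
  (setIntegral_ge_of_const_le_real hs hμs hm hf.integrableOn).trans
    (setIntegral_le_integral hf hf0)

section NormedGroup

variable {E : Type*} [NormedAddCommGroup E]

/-- The integrand of the collision frequency `ν(v)` for a hard potential of exponent `γ`,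
against the Maxwellian `exp (-|w|² / 2)`. -/
noncomputable def collisionIntegrand (γ : ℝ) (v w : E) : ℝ :=
  |‖v‖ - ‖w‖| ^ γ * exp (-(1/2) * ‖w‖ ^ 2)

lemma collisionIntegrand_nonneg (γ : ℝ) (v w : E) : 0 ≤ collisionIntegrand γ v w := by
  unfold collisionIntegrand; positivity

lemma continuous_collisionIntegrand {γ : ℝ} (hγ : 0 ≤ γ) (v : E) :
    Continuous (collisionIntegrand γ v) := by
  unfold collisionIntegrand
  exact ((continuous_const.sub continuous_norm).abs.rpow_const fun _ => Or.inr hγ).mul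
    (by fun_prop)

section InnerProductSpace

variable [InnerProductSpace ℝ E] [FiniteDimensional ℝ E] [MeasurableSpace E] [BorelSpace E]

lemma integrable_exp_neg_mul_norm_sq {b : ℝ} (hb : 0 < b) :
    Integrable (fun w : E => exp (-b * ‖w‖ ^ 2)) := by
  convert (GaussianFourier.integrable_cexp_neg_mul_sq_norm_add (V := E) (b := b)
    (by simpa using hb) 0 0).norm using 2 with w
  simp [Complex.norm_exp, ← Complex.ofReal_pow]

lemma integrable_collisionIntegrand {γ : ℝ} (hγ : 0 ≤ γ) (v : E) :
    Integrable (collisionIntegrand γ v) := by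
  refine ((integrable_exp_neg_mul_norm_sq (E := E) (b := 1/4) (by norm_num)).const_mul
    (exp (γ * ‖v‖ + γ ^ 2))).mono' (continuous_collisionIntegrand hγ v).aestronglyMeasurable
    (Filter.Eventually.of_forall fun w => ?_)
  rw [Real.norm_of_nonneg (collisionIntegrand_nonneg γ v w)]
  exact abs_sub_rpow_mul_exp_le (norm_nonneg v) (norm_nonneg w) hγ

lemma measureReal_closedBall_pos (x : E) {r : ℝ} (hr : 0 < r) :
    0 < volume.real (closedBall x r) :=
  ENNReal.toReal_pos (measure_closedBall_pos _ _ hr).ne' measure_closedBall_lt_top.ne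

lemma measureReal_ball_sdiff_closedBall_pos [Nontrivial E] {r R : ℝ} (hr : 0 ≤ r) (hrR : r < R) :
    0 < volume.real (ball (0 : E) R \ closedBall 0 r) := by
  obtain ⟨x, hx⟩ := exists_norm_eq E (c := (r + R) / 2) (by linarith)
  have hxmem : x ∈ ball (0 : E) R \ closedBall 0 r := by
    simp only [Set.mem_sdiff, mem_ball_zero_iff, mem_closedBall_zero_iff, not_le, hx]
    constructor <;> linarith
  exact ENNReal.toReal_pos
    ((isOpen_ball.sdiff isClosed_closedBall).measure_pos volume ⟨x, hxmem⟩).ne'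
    ((measure_mono Set.sdiff_subset).trans_lt measure_ball_lt_top).ne

lemma mul_measureReal_le_integral_collisionIntegrand_of_one_le {γ : ℝ} (hγ : 0 ≤ γ) {v : E}
    (hv : 1 ≤ ‖v‖) :
    (‖v‖ / 2) ^ γ * exp (-(1/8)) * volume.real (closedBall (0 : E) (1/2)) ≤
      ∫ w, collisionIntegrand γ v w := by
  refine mul_measureReal_le_integral (integrable_collisionIntegrand hγ v)
    (Filter.Eventually.of_forall (collisionIntegrand_nonneg γ v)) measurableSet_closedBall
    measure_closedBall_lt_top.ne fun w hw => ?_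
  rw [mem_closedBall_zero_iff] at hw
  unfold collisionIntegrand
  gcongr
  · rw [le_abs]; left; linarith
  · nlinarith [norm_nonneg w]

lemma mul_measureReal_le_integral_collisionIntegrand_of_le_one {γ : ℝ} (hγ : 0 ≤ γ) {v : E}
    (hv : ‖v‖ ≤ 1) :
    exp (-(9/2)) * volume.real (ball (0 : E) 3 \ closedBall 0 2) ≤
      ∫ w, collisionIntegrand γ v w := by
  refine mul_measureReal_le_integral (integrable_collisionIntegrand hγ v)
    (Filter.Eventually.of_forall (collisionIntegrand_nonneg γ v))
    (measurableSet_ball.diff measurableSet_closedBall)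
    ((measure_mono Set.sdiff_subset).trans_lt measure_ball_lt_top).ne fun w hw => ?_
  simp only [Set.mem_sdiff, mem_ball_zero_iff, mem_closedBall_zero_iff, not_le] at hw
  unfold collisionIntegrand
  rw [← one_mul (exp _)]
  gcongr
  · exact one_le_rpow (by rw [le_abs]; right; linarith) hγ
  · nlinarith

theorem exists_pos_mul_le_integral_collisionIntegrand [Nontrivial E] {γ : ℝ} (hγ : 0 ≤ γ) :
    ∃ c > 0, ∀ v : E, c * (‖v‖ ^ γ + 1) ≤ ∫ w, collisionIntegrand γ v w := by
  set c₁ := (2 ^ γ)⁻¹ * exp (-(1/8)) * volume.real (closedBall (0 : E) (1/2))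
  set c₂ := exp (-(9/2)) * volume.real (ball (0 : E) 3 \ closedBall 0 2)
  have hc₁ : 0 < c₁ := by
    have := measureReal_closedBall_pos (0 : E) (r := 1/2) (by norm_num); positivity
  have hc₂ : 0 < c₂ := by
    have := measureReal_ball_sdiff_closedBall_pos (E := E) (r := 2) (R := 3) (by norm_num)
      (by norm_num)
    positivity
  refine ⟨min c₁ c₂ / 2, by positivity, fun v => ?_⟩
  rcases le_total 1 ‖v‖ with hv | hv
  · have h1 : 1 ≤ ‖v‖ ^ γ := one_le_rpow hv hγ
    calc min c₁ c₂ / 2 * (‖v‖ ^ γ + 1) ≤ c₁ / 2 * (‖v‖ ^ γ + ‖v‖ ^ γ) := by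
          gcongr; exact min_le_left _ _
      _ = (‖v‖ / 2) ^ γ * exp (-(1/8)) * volume.real (closedBall (0 : E) (1/2)) := by
          rw [div_rpow (norm_nonneg v) zero_le_two]; ring
      _ ≤ _ := mul_measureReal_le_integral_collisionIntegrand_of_one_le hγ hv
  · have h1 : ‖v‖ ^ γ ≤ 1 := rpow_le_one (norm_nonneg v) hv hγ
    calc min c₁ c₂ / 2 * (‖v‖ ^ γ + 1) ≤ c₂ / 2 * (1 + 1) := by
          gcongr; exact min_le_right _ _
      _ = c₂ := by ring
      _ ≤ _ := mul_measureReal_le_integral_collisionIntegrand_of_le_one hγ hv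

end InnerProductSpace

end NormedGroup

theorem stmt15 (γ : ℝ) (hγ : 0 ≤ γ) :
    ∃ c : ℝ, 0 < c ∧
      ∀ (v : EuclideanSpace ℝ (Fin 3)) (I : ℝ), 0 ≤ I →
        c * (‖v‖ ^ γ + I ^ (γ / 2) + 1) ≤
          I ^ (γ / 2) +
            ∫ vs : EuclideanSpace ℝ (Fin 3),
              |‖v‖ - ‖vs‖| ^ γ * Real.exp (-(1/2) * ‖vs‖^2) := by
  obtain ⟨c, hc, hν⟩ := exists_pos_mul_le_integral_collisionIntegrand
    (E := EuclideanSpace ℝ (Fin 3)) hγ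
  refine ⟨min c 1, by positivity, fun v I hI => ?_⟩
  have hIγ : 0 ≤ I ^ (γ / 2) := rpow_nonneg hI _
  calc min c 1 * (‖v‖ ^ γ + I ^ (γ / 2) + 1)
      = min c 1 * (‖v‖ ^ γ + 1) + min c 1 * I ^ (γ / 2) := by ring
    _ ≤ c * (‖v‖ ^ γ + 1) + I ^ (γ / 2) :=
        add_le_add (by gcongr; exact min_le_left _ _) (mul_le_of_le_one_left hIγ (min_le_right _ _))
    _ ≤ _ := by rw [add_comm (I ^ _)]; exact add_le_add_left (hν v) _
end
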